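/- Let p < 0 and K₁, K₂ ∈ ℝ with K₁ + K₂ ≤ 0. Let r = √(−p), x₁(t) = r·sin t, x₂(t) = −r·cos t, A(t) = [[p + 3x₁(t)² + x₂(t)², −1 + 2x₁(t)x₂(t)], [1 + 2x₁(t)x₂(t), p + x₁(t)² + 3x₂(t)²]], b = (1,1), K = (K₁,K₂). For each μ ∈ ℂ let Y_μ : ℝ → ℂ^{2×2} satisfy Y_μ(0) = I and Y_μ′(t) = (A(t) − μ·bKᵀ)·Y_μ(t) for all t (real entries viewed as complex), and set P(μ) = Y_μ(2π); assume μ ↦ P(μ) is analytic on ℂ. Then there exists ε_max ∈ (0,1) such that for every ε ∈ (0,ε_max) there exists λ ∈ ℂ with |λ| > 1, λ ≠ 1−ε and det(λ·I − P(1 − ε/(λ−(1−ε)))) = 0. -/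

import Mathlib

open Real Matrix Set Metric Filter Topology

/-!
On the orbit `x₁² + x₂² = -p`, which makes the trace of `A(t) - bKᵀ` the positive constant
`-2p - (K₁ + K₂)`. By Liouville's formula `det P(1) = exp(2π(-2p - K₁ - K₂)) > 1`, hence
`P(1)` has an eigenvalue `z₀` with `|z₀| > 1`. As `ε → 0⁺` the function
`λ ↦ det(λI - P(1 - ε/(λ - (1 - ε))))` converges uniformly near `z₀` to the characteristic
polynomial of `P(1)`, whose zero `z₀` is isolated; by the minimum modulus principle
(a Hurwitz-type argument) the perturbed function has a zero close to `z₀`, still outside the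
unit circle.
-/

theorem det_eq_cexp_of_hasDerivAt_of_trace_eq {M Y : ℝ → Matrix (Fin 2) (Fin 2) ℂ} {c : ℂ}
    (hY₀ : Y 0 = 1) (hY : ∀ t i j, HasDerivAt (fun s => Y s i j) ((M t * Y t) i j) t)
    (htr : ∀ t, (M t).trace = c) (t : ℝ) : (Y t).det = Complex.exp (c * t) := by
  have hdet : ∀ s : ℝ, HasDerivAt (fun u => (Y u).det) (c * (Y s).det) s := fun s => by
    simp only [det_fin_two]
    refine (((hY s 0 0).mul (hY s 1 1)).sub ((hY s 0 1).mul (hY s 1 0))).congr_deriv ?_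
    rw [← htr s]
    simp only [trace_fin_two, mul_apply, Fin.sum_univ_two]
    ring
  have hexp : ∀ s : ℝ, HasDerivAt (fun u : ℝ => Complex.exp (-(c * u)))
      (Complex.exp (-(c * s)) * -c) s := fun s => by
    simpa using (((hasDerivAt_id s).ofReal_comp.const_mul c).neg).cexp
  have hconst : ∀ s : ℝ, (Y s).det * Complex.exp (-(c * s)) = 1 := fun s => by
    have hzero : ∀ u : ℝ, HasDerivAt (fun v => (Y v).det * Complex.exp (-(c * v))) 0 u :=
      fun u => ((hdet u).mul (hexp u)).congr_deriv (by ring)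
    rw [is_const_of_deriv_eq_zero (fun u => (hzero u).differentiableAt)
      (fun u => (hzero u).deriv) s 0]
    simp [hY₀]
  calc (Y t).det = (Y t).det * Complex.exp (-(c * t)) * Complex.exp (c * t) := by
        rw [mul_assoc, ← Complex.exp_add, neg_add_cancel, Complex.exp_zero, mul_one]
    _ = Complex.exp (c * t) := by rw [hconst, one_mul]

theorem exists_mem_roots_charpoly_one_lt_norm {K n : Type*} [NormedField K] [IsAlgClosed K]
    [Fintype n] [DecidableEq n] (M : Matrix n n K) (hM : 1 < ‖M.det‖) : ∃ z ∈ M.charpoly.roots, 1 < ‖z‖ := by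
  by_contra! h
  refine hM.not_ge ?_
  rw [det_eq_prod_roots_charpoly]
  exact Multiset.prod_induction (‖·‖ ≤ 1) _ (fun a b ha hb => by
    rw [norm_mul]; exact mul_le_one₀ ha (norm_nonneg _) hb) (by simp) h

theorem differentiableAt_det {𝕜 E n : Type*} [NontriviallyNormedField 𝕜] [NormedAddCommGroup E]
    [NormedSpace 𝕜 E] [Fintype n] [DecidableEq n] {f : E → Matrix n n 𝕜} {x : E}
    (hf : ∀ i j, DifferentiableAt 𝕜 (fun y => f y i j) x) :
    DifferentiableAt 𝕜 (fun y => (f y).det) x := by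
  simp only [Matrix.det_apply]
  fun_prop

theorem DiffContOnCl.exists_mem_ball_eq_zero {f : ℂ → ℂ} {z₀ : ℂ} {r m : ℝ}
    (hf : DiffContOnCl ℂ f (ball z₀ r)) (hr : 0 < r) (hz₀ : ‖f z₀‖ < m)
    (hsphere : ∀ z ∈ sphere z₀ r, m ≤ ‖f z‖) : ∃ z ∈ ball z₀ r, f z = 0 := by
  -- Otherwise `f⁻¹` is holomorphic on the closed disc and the maximum modulus principle
  -- bounds `‖f z₀‖⁻¹` by `m⁻¹`.
  by_contra! h
  have hm : 0 < m := (norm_nonneg _).trans_lt hz₀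
  have hne : ∀ z ∈ closure (ball z₀ r), f z ≠ 0 := by
    rw [closure_ball z₀ hr.ne', ← ball_union_sphere]
    rintro z (hz | hz)
    · exact h z hz
    · exact norm_pos_iff.1 (hm.trans_le (hsphere z hz))
  have hinv : ‖(f z₀)⁻¹‖ ≤ m⁻¹ := by
    refine Complex.norm_le_of_forall_mem_frontier_norm_le isBounded_ball (hf.inv hne) ?_
      (subset_closure (mem_ball_self hr))
    rw [frontier_ball z₀ hr.ne']
    intro z hz
    rw [Pi.inv_apply, norm_inv]
    exact inv_anti₀ hm (hsphere z hz)
  rw [norm_inv, inv_le_inv₀ (norm_pos_iff.2 (h z₀ (mem_ball_self hr))) hm] at hinv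
  exact hinv.not_gt hz₀

theorem eventually_exists_zero_of_tendstoUniformlyOn {ι : Type*} {l : Filter ι}
    {F : ι → ℂ → ℂ} {g : ℂ → ℂ} {z₀ : ℂ} {U : Set ℂ} (hU : U ∈ 𝓝 z₀)
    (hF : ∀ᶠ i in l, DifferentiableOn ℂ (F i) U) (hFg : TendstoUniformlyOn F g l U)
    (hg : ContinuousOn g U) (hg₀ : g z₀ = 0) (hg_ne : ∀ᶠ z in 𝓝[≠] z₀, g z ≠ 0) :
    ∀ᶠ i in l, ∃ z ∈ U, F i z = 0 := by
  obtain ⟨r, hr, hrU⟩ : ∃ r > 0, closedBall z₀ r ⊆ U ∩ {z | z ≠ z₀ → g z ≠ 0} :=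
    nhds_basis_closedBall.mem_iff.1 (inter_mem hU (eventually_nhdsWithin_iff.1 hg_ne))
  obtain ⟨w, hw, hmin⟩ := (isCompact_sphere z₀ r).exists_isMinOn
    (NormedSpace.sphere_nonempty.2 hr.le)
    ((hg.mono (sphere_subset_closedBall.trans fun z hz => (hrU hz).1)).norm)
  have hm : 0 < ‖g w‖ := by
    refine norm_pos_iff.2 ((hrU (sphere_subset_closedBall hw)).2 fun hwz => ?_)
    rw [hwz, mem_sphere, dist_self] at hw
    exact hr.ne hw
  filter_upwards [hF, Metric.tendstoUniformlyOn_iff.1 hFg _ (half_pos hm)] with i hdiff hclose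
  have hclose' : ∀ z ∈ closedBall z₀ r, ‖g z - F i z‖ < ‖g w‖ / 2 := fun z hz => by
    simpa [dist_eq_norm] using hclose z (hrU hz).1
  obtain ⟨z, hz, hFz⟩ := (hdiff.diffContOnCl_ball fun z hz => (hrU hz).1).exists_mem_ball_eq_zero
    hr (m := ‖g w‖ / 2) (by simpa [hg₀] using hclose' z₀ (mem_closedBall_self hr.le))
    fun z hz => by
      have hFz := hclose' z (sphere_subset_closedBall hz)
      have hgz : ‖g w‖ ≤ ‖g z‖ := hmin hz
      have := norm_sub_norm_le (g z) (g z - F i z)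
      rw [sub_sub_cancel] at this
      linarith
  exact ⟨z, (hrU (ball_subset_closedBall hz)).1, hFz⟩

theorem sub_one_sub_ofReal_ne_zero {lam : ℂ} {ε : ℝ} (hlam : 1 < ‖lam‖) (hε : ε ∈ Icc 0 1) :
    lam - (1 - (ε : ℂ)) ≠ 0 := by
  rw [sub_ne_zero]
  rintro rfl
  rw [← Complex.ofReal_one, ← Complex.ofReal_sub, Complex.norm_real, Real.norm_eq_abs,
    abs_of_nonneg (by linarith [hε.2])] at hlam
  linarith [hε.1]

section ExtendedFeedback

variable {n : Type*} [Fintype n] [DecidableEq n] (P : ℂ → Matrix n n ℂ)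

/-- The characteristic function `λ ↦ det(λI - P(1 - ε/(λ - (1 - ε))))` whose zeros other than
`1 - ε` are the Floquet multipliers under extended time-delayed feedback with parameter `ε`. -/
noncomputable def extendedCharFun (ε : ℝ) (lam : ℂ) : ℂ :=
  (lam • (1 : Matrix n n ℂ) - P (1 - (ε : ℂ) / (lam - (1 - (ε : ℂ))))).det

theorem extendedCharFun_zero : extendedCharFun P 0 = fun lam => (P 1).charpoly.eval lam := by
  ext lam
  simp [extendedCharFun, eval_charpoly, Matrix.smul_one_eq_diagonal]

variable {P}

theorem continuousOn_extendedCharFun (hP : ∀ i j, Continuous fun ν => P ν i j) :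
    ContinuousOn (fun q : ℝ × ℂ => extendedCharFun P q.1 q.2) (Icc 0 1 ×ˢ {lam | 1 < ‖lam‖}) := by
  have hχ : Continuous fun q : ℂ × ℂ => (q.1 • (1 : Matrix n n ℂ) - P q.2).det :=
    ((continuous_fst.smul continuous_const).sub
      ((continuous_matrix hP).comp continuous_snd)).matrix_det
  have hμ : ContinuousOn (fun q : ℝ × ℂ => (q.2, 1 - (q.1 : ℂ) / (q.2 - (1 - (q.1 : ℂ)))))
      (Icc 0 1 ×ˢ {lam | 1 < ‖lam‖}) :=
    continuousOn_snd.prodMk (continuousOn_const.sub (ContinuousOn.div (by fun_prop) (by fun_prop)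
      fun q hq => sub_one_sub_ofReal_ne_zero hq.2 hq.1))
  exact (hχ.comp_continuousOn hμ :)

theorem differentiableOn_extendedCharFun (hP : ∀ i j, Differentiable ℂ fun ν => P ν i j) {ε : ℝ}
    (hε : ε ∈ Icc 0 1) : DifferentiableOn ℂ (extendedCharFun P ε) {lam | 1 < ‖lam‖} := by
  intro lam hlam
  have hμ : DifferentiableAt ℂ (fun w : ℂ => 1 - (ε : ℂ) / (w - (1 - (ε : ℂ)))) lam :=
    (differentiableAt_const _).sub ((differentiableAt_const _).div (by fun_prop)
      (sub_one_sub_ofReal_ne_zero hlam hε))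
  refine (differentiableAt_det fun i j => ?_).differentiableWithinAt
  simp only [Matrix.sub_apply, Matrix.smul_apply, Matrix.one_apply, smul_eq_mul]
  exact (differentiableAt_id.mul (differentiableAt_const _)).sub
    ((hP i j).differentiableAt.comp lam hμ)

theorem tendstoUniformlyOn_extendedCharFun (hP : ∀ i j, Continuous fun ν => P ν i j) {K : Set ℂ}
    (hK : IsCompact K) (hK1 : K ⊆ {lam | 1 < ‖lam‖}) :
    TendstoUniformlyOn (extendedCharFun P) (extendedCharFun P 0) (𝓝[>] 0) K := by
  have huc : UniformContinuousOn (fun q : ℝ × ℂ => extendedCharFun P q.1 q.2) (Icc 0 1 ×ˢ K) :=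
    (isCompact_Icc.prod hK).uniformContinuousOn_of_continuous
      ((continuousOn_extendedCharFun hP).mono (prod_mono subset_rfl hK1))
  have hle : 𝓝[>] (0 : ℝ) ≤ 𝓝[Icc 0 1] 0 :=
    (nhdsWithin_Ioo_eq_nhdsGT zero_lt_one).symm.trans_le (nhdsWithin_mono _ Ioo_subset_Icc_self)
  exact fun u hu => (huc.tendstoUniformlyOn (left_mem_Icc.2 zero_le_one) u hu).filter_mono hle

theorem exists_extendedCharFun_eq_zero (hP : ∀ i j, Differentiable ℂ fun ν => P ν i j) {z₀ : ℂ}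
    (hz₀ : 1 < ‖z₀‖) (hroot : (P 1).charpoly.IsRoot z₀) :
    ∃ εmax ∈ Ioo (0 : ℝ) 1, ∀ ε ∈ Ioo (0 : ℝ) εmax, ∃ lam : ℂ,
      1 < ‖lam‖ ∧ lam ≠ 1 - (ε : ℂ) ∧ extendedCharFun P ε lam = 0 := by
  set K := closedBall z₀ ((‖z₀‖ - 1) / 2)
  have hK1 : K ⊆ {lam | 1 < ‖lam‖} := fun lam hlam => by
    rw [mem_closedBall, dist_comm, dist_eq_norm] at hlam
    have := norm_sub_norm_le z₀ lam
    show 1 < ‖lam‖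
    linarith
  have hzeros : ∀ᶠ ε in 𝓝[>] (0 : ℝ), ∃ lam ∈ K, extendedCharFun P ε lam = 0 := by
    refine eventually_exists_zero_of_tendstoUniformlyOn (closedBall_mem_nhds _ (by linarith)) ?_
      (tendstoUniformlyOn_extendedCharFun (fun i j => (hP i j).continuous)
        (isCompact_closedBall _ _) hK1) ?_ ?_ ?_
    · filter_upwards [Ioo_mem_nhdsGT zero_lt_one] with ε hε
      exact (differentiableOn_extendedCharFun hP (Ioo_subset_Icc_self hε)).mono hK1
    · rw [extendedCharFun_zero]
      exact (Polynomial.continuous _).continuousOn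
    · rwa [extendedCharFun_zero]
    · rw [extendedCharFun_zero]
      exact nhdsNE_le_cofinite z₀ (Polynomial.finite_setOfPred_isRoot
        (charpoly_monic _).ne_zero).eventually_cofinite_notMem
  obtain ⟨u, hu, hsub⟩ :=
    mem_nhdsGT_iff_exists_Ioo_subset.1 (hzeros.and (Ioo_mem_nhdsGT zero_lt_one))
  refine ⟨min u (1 / 2), ⟨lt_min hu (by norm_num), by linarith [min_le_right u (1 / 2)]⟩,
    fun ε hε => ?_⟩
  obtain ⟨⟨lam, hlamK, hlam⟩, hε1⟩ := hsub ⟨hε.1, hε.2.trans_le (min_le_left _ _)⟩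
  exact ⟨lam, hK1 hlamK, fun h => sub_one_sub_ofReal_ne_zero (hK1 hlamK)
    (Ioo_subset_Icc_self hε1) (sub_eq_zero.2 h), hlam⟩

end ExtendedFeedback

/-- **Lemma 5.1 (lack of stabilisability for constant gains), provable branch.**
For the Hopf normal-form orbit and constant gains with `K₁ + K₂ ≤ 0`, the extended
time-delayed feedback characteristic function `λ ↦ det(λI − P(1 − ε/(λ−(1−ε))))` has a
root outside the unit circle for all sufficiently small `ε > 0`. -/
theorem stmt_14 (p : ℝ) (hp : p < 0) (K1 K2 : ℝ) (hK : K1 + K2 ≤ 0)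
    (r : ℝ) (hr : r = Real.sqrt (-p))
    (x1 x2 : ℝ → ℝ) (hx1 : ∀ t, x1 t = r * Real.sin t)
    (hx2 : ∀ t, x2 t = -r * Real.cos t)
    (A : ℝ → Matrix (Fin 2) (Fin 2) ℝ)
    (hA : ∀ t, A t = !![p + 3 * x1 t ^ 2 + x2 t ^ 2, -1 + 2 * x1 t * x2 t;
                       1 + 2 * x1 t * x2 t, p + x1 t ^ 2 + 3 * x2 t ^ 2])
    (b K : Fin 2 → ℝ) (hb : b = ![1, 1]) (hKdef : K = ![K1, K2])
    (Y : ℂ → ℝ → Matrix (Fin 2) (Fin 2) ℂ)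
    (hY0 : ∀ μ : ℂ, Y μ 0 = 1)
    (hYode : ∀ (μ : ℂ) (t : ℝ) (i j : Fin 2),
      HasDerivAt (fun s => Y μ s i j)
        ((((A t).map (Complex.ofReal)
            - μ • Matrix.vecMulVec (fun i => ((b i : ℝ) : ℂ)) (fun j => ((K j : ℝ) : ℂ)))
          * Y μ t) i j) t)
    (P : ℂ → Matrix (Fin 2) (Fin 2) ℂ) (hP : ∀ μ, P μ = Y μ (2 * π))
    (hPanalytic : ∀ (μ : ℂ) (i j : Fin 2), AnalyticAt ℂ (fun ν => P ν i j) μ) :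
    ∃ εmax ∈ Ioo (0 : ℝ) 1, ∀ ε ∈ Ioo (0 : ℝ) εmax, ∃ lam : ℂ,
      1 < ‖lam‖ ∧ lam ≠ 1 - (ε : ℂ) ∧
      Matrix.det (lam • (1 : Matrix (Fin 2) (Fin 2) ℂ)
        - P (1 - (ε : ℂ) / (lam - (1 - (ε : ℂ))))) = 0 := by
  have hcircle : ∀ t, x1 t ^ 2 + x2 t ^ 2 = -p := fun t => by
    rw [hx1, hx2, hr]
    nlinarith [sin_sq_add_cos_sq t, sq_sqrt (neg_nonneg.2 hp.le)]
  have htrace : ∀ t, ((A t).map Complex.ofReal - (1 : ℂ) •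
      vecMulVec (fun i => ((b i : ℝ) : ℂ)) (fun j => ((K j : ℝ) : ℂ))).trace
      = ((-2 * p - (K1 + K2) : ℝ) : ℂ) := fun t => by
    have h := congrArg Complex.ofReal (hcircle t)
    simp only [hA, hb, hKdef, one_smul, trace_sub, trace_vecMulVec, vec2_dotProduct, trace_fin_two,
      map_apply, of_apply, cons_val_zero, cons_val_one]
    push_cast at h ⊢
    linear_combination 4 * h
  have hdet : 1 < ‖(P 1).det‖ := by
    rw [hP, det_eq_cexp_of_hasDerivAt_of_trace_eq (hY0 1) (hYode 1) htrace, ← Complex.ofReal_mul,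
      Complex.norm_exp_ofReal, one_lt_exp_iff]
    nlinarith [pi_pos]
  obtain ⟨z₀, hroot, hz₀⟩ := exists_mem_roots_charpoly_one_lt_norm (P 1) hdet
  exact exists_extendedCharFun_eq_zero (fun i j ν => (hPanalytic ν i j).differentiableAt) hz₀
    ((Polynomial.mem_roots (charpoly_monic _).ne_zero).1 hroot)
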